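/- arXiv:2409.13267 — 3 statements merged into one kernel-verified Lean document; each statement's English description precedes it below -/
import Mathlib

section
/- For any nonzero vector z in R^p with r = ‖z‖ and u = z/‖z‖, and any vector μ with ‖μ‖ < r, one has |‖z-μ‖ - ‖z‖ + uᵀμ| ≤ 2‖μ‖²/r. -/
open scoped RealInnerProductSpace

lemma norm_sub_approx_linear_aux (a m r s : ℝ) (hrpos : 0 < r) (ha0 : 0 ≤ a)
    (hm0 : 0 ≤ m) (hμ : m < r) (hs1 : s ≤ r * m) (hs2 : -(r * m) ≤ s)
    (hsq : a ^ 2 = r ^ 2 - 2 * s + m ^ 2) :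
    |r * a - r ^ 2 + s| ≤ 2 * m ^ 2 := by
  have hrs : r ^ 2 - s > 0 := by nlinarith
  have hkey : r ^ 2 - s ≤ r * a := by
    nlinarith [sq_nonneg (r * a - (r ^ 2 - s)), sq_nonneg (r * a + (r ^ 2 - s)),
      sq_nonneg (r * m - s), sq_nonneg (r * m + s), mul_nonneg hrpos.le ha0]
  have hX0 : 0 ≤ r * a - r ^ 2 + s := by linarith
  rw [abs_of_nonneg hX0]
  have hfact : (r * a - r ^ 2 + s) * (r * a + r ^ 2 - s) = r ^ 2 * m ^ 2 - s ^ 2 := by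
    nlinarith [hsq]
  have h5 : (r * a - r ^ 2 + s) * (2 * (r ^ 2 - s)) ≤ r ^ 2 * m ^ 2 - s ^ 2 := by
    nlinarith [mul_le_mul_of_nonneg_left
      (show 2 * (r ^ 2 - s) ≤ r * a + r ^ 2 - s by linarith) hX0]
  rcases le_or_gt (2 * s) (r ^ 2) with hcase | hcase
  · nlinarith [mul_le_mul_of_nonneg_left (show r ^ 2 ≤ 2 * (r ^ 2 - s) by linarith) hX0,
      sq_nonneg s, mul_pos hrpos hrpos]
  · have hmr : r < 2 * m := by nlinarith
    have hrm : r * m ≤ r ^ 2 := by nlinarith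
    have h6 : (r * m - s) * (r * m + s) ≤ (r ^ 2 - s) * (r * m + s) :=
      mul_le_mul_of_nonneg_right (by linarith) (by linarith)
    have h7 : r * a - r ^ 2 + s ≤ (r * m + s) / 2 := by
      rw [le_div_iff₀ (by norm_num : (0:ℝ) < 2)]
      nlinarith [h5, h6]
    nlinarith [h7]

/-- First-order (linear) accuracy of the map `μ ↦ ‖z - μ‖`:
for nonzero `z` with `r = ‖z‖`, `u = z / ‖z‖`, and `‖μ‖ < r`,
`|‖z-μ‖ - ‖z‖ + uᵀμ| ≤ 2 ‖μ‖² / r`. -/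
theorem norm_sub_approx_linear {p : ℕ}
    (z μ : EuclideanSpace ℝ (Fin p)) (hz : z ≠ 0)
    (r : ℝ) (hr : r = ‖z‖) (u : EuclideanSpace ℝ (Fin p)) (hu : u = r⁻¹ • z)
    (hμ : ‖μ‖ < r) :
    |‖z - μ‖ - ‖z‖ + ⟪u, μ⟫| ≤ 2 * ‖μ‖ ^ 2 / r := by
  have hzpos : (0:ℝ) < ‖z‖ := norm_pos_iff.mpr hz
  have hrpos : 0 < r := hr ▸ hzpos
  set a := ‖z - μ‖ with ha
  set m := ‖μ‖ with hm
  set s := ⟪z, μ⟫ with hs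
  have hinner : ⟪u, μ⟫ = s / r := by
    rw [hu, real_inner_smul_left, ← hs, div_eq_inv_mul]
  have hCS : |s| ≤ r * m := by
    rw [hr]; exact abs_real_inner_le_norm z μ
  have hsq : a ^ 2 = r ^ 2 - 2 * s + m ^ 2 := by
    rw [hr, ha, hm, hs]
    exact norm_sub_sq_real z μ
  have hkey := norm_sub_approx_linear_aux a m r s hrpos (norm_nonneg _) (norm_nonneg _)
    hμ (abs_le.mp hCS).2 (abs_le.mp hCS).1 hsq
  have hrw : a - ‖z‖ + ⟪u, μ⟫ = (r * a - r ^ 2 + s) / r := by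
    rw [hinner, ← hr]; field_simp
  rw [hrw, abs_div, abs_of_pos hrpos, div_le_div_iff_of_pos_right hrpos]
  exact hkey
end

section
/- Let S and Ŝ be d×d real symmetric matrices and suppose λ₁(S) > λ₂(S), where λ_j denotes the j-th largest eigenvalue. Let u₁(S), u₁(Ŝ) be unit leading eigenvectors. Then |sin∠(u₁(Ŝ), u₁(S))| ≤ (2/(λ₁(S) - λ₂(S))) · ‖Ŝ - S‖₂, where |sin∠(v₁,v₂)| = √(1-(v₁ᵀv₂)²). -/
open scoped RealInnerProductSpace

/-- The spectral (operator) norm of a real `d × d` matrix. -/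
noncomputable def specNorm {d : ℕ} (M : Matrix (Fin d) (Fin d) ℝ) : ℝ :=
  ‖Matrix.toEuclideanCLM (𝕜 := ℝ) M‖

/-- `(r, v)` is an eigenpair of `M`: `v ≠ 0` and `M v = r v`. -/
def IsEigenpair {d : ℕ} (M : Matrix (Fin d) (Fin d) ℝ) (r : ℝ)
    (v : EuclideanSpace ℝ (Fin d)) : Prop :=
  v ≠ 0 ∧ ∀ i, (∑ j, M i j * v j) = r * v i

/-- The set of eigenvalues of `M`. -/
def eigVals {d : ℕ} (M : Matrix (Fin d) (Fin d) ℝ) : Set ℝ :=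
  {r | ∃ v, IsEigenpair M r v}

lemma isEigenpair_iff_lin {d : ℕ} (M : Matrix (Fin d) (Fin d) ℝ) (r : ℝ)
    (v : EuclideanSpace ℝ (Fin d)) :
    IsEigenpair M r v ↔ v ≠ 0 ∧ Matrix.toEuclideanLin M v = r • v := by
  have key : (∀ i, (∑ j, M i j * v j) = r * v i) ↔ Matrix.toEuclideanLin M v = r • v := by
    constructor
    · intro h
      ext i
      simpa [Matrix.toEuclideanLin_apply, Matrix.mulVec, dotProduct] using h i
    · intro h i
      have := congrFun (congrArg (WithLp.equiv 2 (Fin d → ℝ)) h) i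
      simpa [Matrix.toEuclideanLin_apply, Matrix.mulVec, dotProduct] using this
  unfold IsEigenpair
  rw [key]

lemma isSymmetric_of_isSymm {d : ℕ} {M : Matrix (Fin d) (Fin d) ℝ} (hM : M.IsSymm) :
    (Matrix.toEuclideanLin M).IsSymmetric := by
  refine Matrix.isHermitian_iff_isSymmetric.mp ?_
  ext i j
  simp [Matrix.conjTranspose_apply, hM.apply i j]

/-- Expansion of the quadratic form in an eigenbasis. -/
lemma inner_toEuclideanLin_eq_sum {d : ℕ} {M : Matrix (Fin d) (Fin d) ℝ} (hM : M.IsSymm)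
    (v : EuclideanSpace ℝ (Fin d)) :
    ∀ (hn : Module.finrank ℝ (EuclideanSpace ℝ (Fin d)) = d),
    ⟪v, Matrix.toEuclideanLin M v⟫ =
      ∑ i, (isSymmetric_of_isSymm hM).eigenvalues hn i *
        ⟪(isSymmetric_of_isSymm hM).eigenvectorBasis hn i, v⟫ ^ 2 := by
  intro hn
  set hsym := isSymmetric_of_isSymm hM
  set b := hsym.eigenvectorBasis hn with hb
  set μ := hsym.eigenvalues hn with hμ
  have h1 : ⟪v, Matrix.toEuclideanLin M v⟫ =
      ∑ i, ⟪v, b i⟫ * ⟪b i, Matrix.toEuclideanLin M v⟫ :=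
    (b.sum_inner_mul_inner v (Matrix.toEuclideanLin M v)).symm
  rw [h1]
  refine Finset.sum_congr rfl fun i _ => ?_
  have h2 : ⟪b i, Matrix.toEuclideanLin M v⟫ = ⟪Matrix.toEuclideanLin M (b i), v⟫ :=
    (hsym _ _).symm
  have h3 : Matrix.toEuclideanLin M (b i) = μ i • b i := hsym.apply_eigenvectorBasis hn i
  rw [h2, h3, real_inner_smul_left, real_inner_comm v (b i)]
  ring

lemma norm_sq_eq_sum_inner {d : ℕ} (b : OrthonormalBasis (Fin d) ℝ (EuclideanSpace ℝ (Fin d)))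
    (v : EuclideanSpace ℝ (Fin d)) :
    ‖v‖ ^ 2 = ∑ i, ⟪b i, v⟫ ^ 2 := by
  have := b.sum_inner_mul_inner v v
  rw [real_inner_self_eq_norm_sq] at this
  rw [← this]
  refine Finset.sum_congr rfl fun i _ => ?_
  rw [real_inner_comm v (b i)]
  ring

/-- Rayleigh quotient bound: the quadratic form is at most the largest eigenvalue. -/
lemma rayleigh_le_max {d : ℕ} {M : Matrix (Fin d) (Fin d) ℝ} (hM : M.IsSymm) {l : ℝ}
    (hl : IsGreatest (eigVals M) l) (v : EuclideanSpace ℝ (Fin d)) :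
    ⟪v, Matrix.toEuclideanLin M v⟫ ≤ l * ‖v‖ ^ 2 := by
  have hn : Module.finrank ℝ (EuclideanSpace ℝ (Fin d)) = d := finrank_euclideanSpace_fin
  set hsym := isSymmetric_of_isSymm hM
  set b := hsym.eigenvectorBasis hn with hb
  set μ := hsym.eigenvalues hn with hμ
  rw [inner_toEuclideanLin_eq_sum hM v hn, norm_sq_eq_sum_inner b v, Finset.mul_sum]
  refine Finset.sum_le_sum fun i _ => ?_
  have hev : μ i ∈ eigVals M := by
    refine ⟨b i, (isEigenpair_iff_lin M (μ i) (b i)).mpr ⟨?_, ?_⟩⟩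
    · intro h
      have := b.orthonormal.1 i
      rw [h] at this; simp at this
    · exact hsym.apply_eigenvectorBasis hn i
  exact mul_le_mul_of_nonneg_right (hl.2 hev) (sq_nonneg _)

/-- On the orthogonal complement of the leading eigenvector, the quadratic form
is at most the second eigenvalue. -/
lemma rayleigh_perp_le {d : ℕ} {S : Matrix (Fin d) (Fin d) ℝ} (hS : S.IsSymm)
    {l1 l2 : ℝ} (hl1 : IsGreatest (eigVals S) l1)
    (hsimple : ∀ v w, IsEigenpair S l1 v → IsEigenpair S l1 w → ∃ c : ℝ, w = c • v)
    (hl2 : IsGreatest (eigVals S \ {l1}) l2)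
    {u1 : EuclideanSpace ℝ (Fin d)} (hu1 : IsEigenpair S l1 u1)
    (w : EuclideanSpace ℝ (Fin d)) (hw : ⟪u1, w⟫ = 0) :
    ⟪w, Matrix.toEuclideanLin S w⟫ ≤ l2 * ‖w‖ ^ 2 := by
  have hn : Module.finrank ℝ (EuclideanSpace ℝ (Fin d)) = d := finrank_euclideanSpace_fin
  set hsym := isSymmetric_of_isSymm hS
  set b := hsym.eigenvectorBasis hn with hb
  set μ := hsym.eigenvalues hn with hμ
  rw [inner_toEuclideanLin_eq_sum hS w hn, norm_sq_eq_sum_inner b w, Finset.mul_sum]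
  refine Finset.sum_le_sum fun i _ => ?_
  have hpair : IsEigenpair S (μ i) (b i) := by
    refine (isEigenpair_iff_lin S (μ i) (b i)).mpr ⟨?_, hsym.apply_eigenvectorBasis hn i⟩
    intro h
    have := b.orthonormal.1 i
    rw [h] at this; simp at this
  by_cases hcase : μ i = l1
  · -- then b i is a multiple of u1, so orthogonal to w
    obtain ⟨c, hc⟩ := hsimple u1 (b i) hu1 (hcase ▸ hpair)
    have : ⟪b i, w⟫ = 0 := by rw [hc, real_inner_smul_left, hw, mul_zero]
    rw [this]
    simp
  · have hev : μ i ∈ eigVals S \ {l1} := ⟨⟨b i, hpair⟩, hcase⟩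
    exact mul_le_mul_of_nonneg_right (hl2.2 hev) (sq_nonneg _)

lemma abs_inner_sub_le {d : ℕ} (Shat S : Matrix (Fin d) (Fin d) ℝ)
    (x y : EuclideanSpace ℝ (Fin d)) :
    |⟪x, Matrix.toEuclideanLin Shat y - Matrix.toEuclideanLin S y⟫| ≤
      specNorm (Shat - S) * ‖x‖ * ‖y‖ := by
  have hco : ∀ (M : Matrix (Fin d) (Fin d) ℝ) (z : EuclideanSpace ℝ (Fin d)),
      Matrix.toEuclideanCLM (𝕜 := ℝ) M z = Matrix.toEuclideanLin M z := by
    intro M z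
    rw [← Matrix.coe_toEuclideanCLM_eq_toEuclideanLin]
    rfl
  have h1 : Matrix.toEuclideanLin Shat y - Matrix.toEuclideanLin S y =
      Matrix.toEuclideanCLM (𝕜 := ℝ) (Shat - S) y := by
    rw [map_sub]
    simp [hco]
  rw [h1]
  calc |⟪x, Matrix.toEuclideanCLM (𝕜 := ℝ) (Shat - S) y⟫|
      ≤ ‖x‖ * ‖Matrix.toEuclideanCLM (𝕜 := ℝ) (Shat - S) y‖ := abs_real_inner_le_norm _ _
    _ ≤ ‖x‖ * (specNorm (Shat - S) * ‖y‖) := by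
        refine mul_le_mul_of_nonneg_left ?_ (norm_nonneg x)
        exact (Matrix.toEuclideanCLM (𝕜 := ℝ) (Shat - S)).le_opNorm y
    _ = specNorm (Shat - S) * ‖x‖ * ‖y‖ := by ring

/-- Davis–Kahan sin-theta inequality for the leading eigenvector: if `S, Ŝ` are
symmetric, `λ₁(S) > λ₂(S)` (`λ₁` the largest eigenvalue, simple, and `λ₂` the
second largest), and `u₁(S), u₁(Ŝ)` are unit leading eigenvectors, then
`|sin∠(u₁(Ŝ), u₁(S))| ≤ 2 ‖Ŝ - S‖₂ / (λ₁(S) - λ₂(S))`. -/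
theorem davis_kahan_leading {d : ℕ} (S Shat : Matrix (Fin d) (Fin d) ℝ)
    (hS : S.IsSymm) (hShat : Shat.IsSymm)
    (l1 l2 : ℝ) (hl1 : IsGreatest (eigVals S) l1)
    (hsimple : ∀ v w, IsEigenpair S l1 v → IsEigenpair S l1 w → ∃ c : ℝ, w = c • v)
    (hl2 : IsGreatest (eigVals S \ {l1}) l2) (hgap : l2 < l1)
    (u1 : EuclideanSpace ℝ (Fin d)) (hu1norm : ‖u1‖ = 1)
    (hu1 : IsEigenpair S l1 u1)
    (lhat : ℝ) (hlhat : IsGreatest (eigVals Shat) lhat)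
    (uhat : EuclideanSpace ℝ (Fin d)) (huhatnorm : ‖uhat‖ = 1)
    (huhat : IsEigenpair Shat lhat uhat) :
    Real.sqrt (1 - ⟪uhat, u1⟫ ^ 2) ≤ 2 / (l1 - l2) * specNorm (Shat - S) := by
  set A := Matrix.toEuclideanLin S with hA
  set Ahat := Matrix.toEuclideanLin Shat with hAhat
  set ε := specNorm (Shat - S) with hε
  have hεnn : 0 ≤ ε := norm_nonneg _
  set c : ℝ := ⟪uhat, u1⟫ with hc
  set w : EuclideanSpace ℝ (Fin d) := uhat - c • u1 with hwdef
  have hAu1 : A u1 = l1 • u1 := ((isEigenpair_iff_lin S l1 u1).mp hu1).2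
  have hAhatuhat : Ahat uhat = lhat • uhat := ((isEigenpair_iff_lin Shat lhat uhat).mp huhat).2
  have hinneru1 : ⟪u1, u1⟫ = 1 := by
    rw [real_inner_self_eq_norm_sq, hu1norm]; norm_num
  have hinneruhat : ⟪uhat, uhat⟫ = 1 := by
    rw [real_inner_self_eq_norm_sq, huhatnorm]; norm_num
  have hcomm : ⟪u1, uhat⟫ = c := by rw [hc, real_inner_comm]
  have hu1w : ⟪u1, w⟫ = 0 := by
    rw [hwdef, inner_sub_right, real_inner_smul_right, hinneru1, hcomm]
    ring
  have hwu1 : ⟪w, u1⟫ = 0 := by rw [real_inner_comm]; exact hu1w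
  have hww : ⟪w, w⟫ = 1 - c ^ 2 := by
    rw [hwdef]
    simp only [inner_sub_left, inner_sub_right, real_inner_smul_left, real_inner_smul_right,
      hinneru1, hinneruhat, hcomm, ← hc]
    ring
  have hc2 : c ^ 2 ≤ 1 := by
    have h := abs_real_inner_le_norm uhat u1
    rw [hu1norm, huhatnorm] at h
    nlinarith [abs_nonneg c, sq_abs c, h]
  have htnn : (0:ℝ) ≤ 1 - c ^ 2 := by linarith
  set s : ℝ := Real.sqrt (1 - c ^ 2) with hs
  have hsnn : 0 ≤ s := Real.sqrt_nonneg _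
  have hs2 : s ^ 2 = 1 - c ^ 2 := Real.sq_sqrt htnn
  have hnormw : ‖w‖ = s := by
    rw [hs, ← hww, real_inner_self_eq_norm_sq, Real.sqrt_sq (norm_nonneg w)]
  have hs1 : s ≤ 1 := by
    rw [hs]
    calc Real.sqrt (1 - c ^ 2) ≤ Real.sqrt 1 := Real.sqrt_le_sqrt (by nlinarith [sq_nonneg c])
      _ = 1 := Real.sqrt_one
  have hwuhat : ⟪w, uhat⟫ = 1 - c ^ 2 := by
    have h : uhat = w + c • u1 := by rw [hwdef]; abel
    rw [h, inner_add_right, real_inner_smul_right, hwu1, hww]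
    ring
  have huhatw : (uhat : EuclideanSpace ℝ (Fin d)) = w + c • u1 := by rw [hwdef]; abel
  -- primitive facts involving A, Ahat, ε
  have hray : ⟪u1, Ahat u1⟫ ≤ lhat * ‖u1‖ ^ 2 := rayleigh_le_max hShat hlhat u1
  have hperp : ⟪w, A w⟫ ≤ l2 * ‖w‖ ^ 2 := rayleigh_perp_le hS hl1 hsimple hl2 hu1 w hu1w
  have habs1 : |⟪u1, Ahat u1 - A u1⟫| ≤ ε * ‖u1‖ * ‖u1‖ := abs_inner_sub_le Shat S u1 u1
  have habs2 : |⟪w, Ahat uhat - A uhat⟫| ≤ ε * ‖w‖ * ‖uhat‖ := abs_inner_sub_le Shat S w uhat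
  have hAsum : A uhat = A w + c • (l1 • u1) := by rw [huhatw, map_add, map_smul, hAu1]
  clear_value A Ahat ε c w s
  clear hs hwdef hc
  rw [hu1norm] at hray habs1
  rw [hnormw, huhatnorm] at habs2
  rw [hnormw, hs2] at hperp
  -- Inequality 1 : l1 - ε ≤ lhat
  have ineq1 : l1 - ε ≤ lhat := by
    have hAval : ⟪u1, A u1⟫ = l1 := by
      rw [hAu1, real_inner_smul_right, hinneru1]; ring
    have hsplit : ⟪u1, Ahat u1⟫ = l1 + ⟪u1, Ahat u1 - A u1⟫ := by
      rw [inner_sub_right, hAval]; ring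
    have h2 := abs_le.mp habs1
    nlinarith [h2.1, h2.2]
  -- Inequality 2 : (lhat - l2) * (1 - c²) ≤ ε * s
  have ineq2 : (lhat - l2) * (1 - c ^ 2) ≤ ε * s := by
    have hsplit : ⟪w, A uhat⟫ = lhat * (1 - c ^ 2) - ⟪w, Ahat uhat - A uhat⟫ := by
      rw [inner_sub_right, hAhatuhat, real_inner_smul_right, hwuhat]; ring
    have hperp2 : ⟪w, A uhat⟫ ≤ l2 * (1 - c ^ 2) := by
      rw [hAsum, inner_add_right, real_inner_smul_right, real_inner_smul_right, hwu1]
      linarith [hperp]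
    have h2 := abs_le.mp habs2
    linarith [h2.1, h2.2, hsplit, hperp2]
  -- combine
  have hmul : 0 ≤ (lhat - (l1 - ε)) * (1 - c ^ 2) :=
    mul_nonneg (by linarith [ineq1]) htnn
  have combine : (l1 - l2) * (1 - c ^ 2) ≤ ε * s + ε * (1 - c ^ 2) := by
    linarith [ineq2, hmul]
  have hgap' : (0 : ℝ) < l1 - l2 := by linarith
  show s ≤ 2 / (l1 - l2) * ε
  rw [div_mul_eq_mul_div, le_div_iff₀ hgap']
  -- goal : s * (l1 - l2) ≤ 2 * ε
  have hq : 1 - c ^ 2 = s * s := by rw [← hs2]; ring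
  have hss : s * s ≤ s * 1 := mul_le_mul_of_nonneg_left hs1 hsnn
  have hts : 1 - c ^ 2 ≤ s := by rw [hq]; linarith [hss]
  have hε2 : ε * (1 - c ^ 2) ≤ ε * s := mul_le_mul_of_nonneg_left hts hεnn
  rcases eq_or_lt_of_le hsnn with hzero | hpos
  · rw [← hzero, zero_mul]; positivity
  · have combine2 : (l1 - l2) * (s * s) ≤ ε * s + ε * (s * s) := by rw [← hq]; exact combine
    have hε3 : ε * (s * s) ≤ ε * s := by rw [← hq]; exact hε2
    have key : (s * (l1 - l2)) * s ≤ (2 * ε) * s := by linarith [combine2, hε3]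
    exact le_of_mul_le_mul_right key hpos
end

section
/- Let Ŝ and S be d×d symmetric matrices, m < d, and suppose λ_m(S) > λ_{m+1}(S). Let P^m(Ŝ) and P^m(S) denote the orthogonal projection matrices onto the span of the m leading eigenvectors of Ŝ and S respectively. Then ‖P^m(Ŝ) - P^m(S)‖_F ≤ (2√(2m)/(λ_m(S) - λ_{m+1}(S))) · ‖Ŝ - S‖₂. -/
/-- The Frobenius norm of a real `d × d` matrix. -/
noncomputable def frobNorm {d : ℕ} (M : Matrix (Fin d) (Fin d) ℝ) : ℝ :=
  Real.sqrt (∑ j, ∑ k, (M j k) ^ 2)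

open Matrix Finset

section StarProjection

variable {n : Type*} [Fintype n]

lemma isStarProjection_iff_transpose {P : Matrix n n ℝ} :
    IsStarProjection P ↔ P * P = P ∧ Pᵀ = P := by
  rw [isStarProjection_iff', star_eq_conjTranspose, conjTranspose_eq_transpose_of_trivial]

lemma IsStarProjection.transpose_eq_self {P : Matrix n n ℝ} (hP : IsStarProjection P) :
    Pᵀ = P :=
  (isStarProjection_iff_transpose.mp hP).2

lemma IsStarProjection.diag_mem_Icc {P : Matrix n n ℝ} (hP : IsStarProjection P) (i : n) :
    P i i ∈ Set.Icc 0 1 := by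
  obtain ⟨hPP, hPt⟩ := isStarProjection_iff_transpose.mp hP
  have hsq : P i i = ∑ k, P i k ^ 2 := by
    conv_lhs => rw [← hPP]
    rw [mul_apply]
    refine sum_congr rfl fun k _ => ?_
    rw [sq, ← transpose_apply P k i, hPt]
  have hle : P i i ^ 2 ≤ P i i :=
    hsq ▸ single_le_sum (fun k _ => sq_nonneg (P i k)) (mem_univ i)
  constructor <;> nlinarith [sq_nonneg (P i i)]

variable [DecidableEq n]

lemma IsStarProjection.transpose_mul_mul {F D : Matrix n n ℝ} (hF : F * Fᵀ = 1)
    (hD : IsStarProjection D) : IsStarProjection (Fᵀ * D * F) := by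
  obtain ⟨hDD, hDt⟩ := isStarProjection_iff_transpose.mp hD
  refine isStarProjection_iff_transpose.mpr ⟨?_, ?_⟩
  · calc Fᵀ * D * F * (Fᵀ * D * F) = Fᵀ * D * (F * Fᵀ) * D * F := by
          simp only [Matrix.mul_assoc]
      _ = Fᵀ * D * F := by rw [hF, Matrix.mul_one, Matrix.mul_assoc Fᵀ D D, hDD]
  · rw [transpose_mul, transpose_mul, transpose_transpose, hDt, Matrix.mul_assoc]

lemma isStarProjection_diagonal_ite (p : n → Prop) [DecidablePred p] :
    IsStarProjection (diagonal fun j => if p j then (1 : ℝ) else 0) := by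
  refine isStarProjection_iff_transpose.mpr ⟨?_, diagonal_transpose _⟩
  rw [diagonal_mul_diagonal]
  congr 1
  ext j
  split_ifs <;> simp

end StarProjection

section Conjugation

variable {n : Type*} [Fintype n]

lemma trace_transpose_mul_mul_mul (F X Y : Matrix n n ℝ) :
    (Fᵀ * X * F * Y).trace = (X * (F * Y * Fᵀ)).trace := by
  rw [Matrix.mul_assoc, Matrix.mul_assoc, trace_mul_comm, Matrix.mul_assoc, Matrix.mul_assoc]

variable [DecidableEq n]

lemma trace_transpose_mul_mul {F : Matrix n n ℝ} (hF : F * Fᵀ = 1) (X : Matrix n n ℝ) :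
    (Fᵀ * X * F).trace = X.trace := by
  rw [trace_mul_comm, ← Matrix.mul_assoc, hF, Matrix.one_mul]

lemma trace_diagonal_mul (v : n → ℝ) (M : Matrix n n ℝ) :
    (diagonal v * M).trace = ∑ i, v i * M i i := by
  simp only [trace, Matrix.diag, diagonal_mul]

lemma mul_transpose_eq_one_of_orthonormal {f : n → EuclideanSpace ℝ n}
    (hf : Orthonormal ℝ f) :
    of (fun j i => f j i) * (of fun j i => f j i)ᵀ = 1 := by
  ext j j'
  have h := orthonormal_iff_ite.mp hf j' j
  simp only [PiLp.inner_apply, RCLike.inner_apply, conj_trivial] at h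
  simpa only [mul_apply, transpose_apply, of_apply, one_apply, eq_comm (a := j')] using h

lemma eq_transpose_mul_diagonal_mul_of_eigenvectors {f : n → EuclideanSpace ℝ n}
    (hf : Orthonormal ℝ f) {S : Matrix n n ℝ} {lam : n → ℝ}
    (hS : ∀ j i, ∑ k, S i k * f j k = lam j * f j i) :
    S = (of fun j i => f j i)ᵀ * diagonal lam * of fun j i => f j i := by
  have hSF : S * (of fun j i => f j i)ᵀ = (of fun j i => f j i)ᵀ * diagonal lam := by
    ext i j
    rw [mul_diagonal, mul_apply]
    simp only [transpose_apply, of_apply]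
    rw [hS, mul_comm]
  rw [← hSF, Matrix.mul_assoc, mul_eq_one_comm.mp (mul_transpose_eq_one_of_orthonormal hf),
    Matrix.mul_one]

lemma eq_transpose_mul_diagonal_mul_of_sum {f : n → EuclideanSpace ℝ n} {P : Matrix n n ℝ}
    (p : n → Prop) [DecidablePred p] (hP : ∀ i k, P i k = ∑ j ∈ univ.filter p, f j i * f j k) :
    P = (of fun j i => f j i)ᵀ * diagonal (fun j => if p j then 1 else 0) *
      of fun j i => f j i := by
  ext i k
  rw [mul_apply, hP, sum_filter]
  simp only [mul_diagonal, transpose_apply, of_apply, mul_ite, mul_one, mul_zero, ite_mul,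
    zero_mul]

lemma isStarProjection_of_orthonormal {f : n → EuclideanSpace ℝ n} (hf : Orthonormal ℝ f)
    {P : Matrix n n ℝ} (p : n → Prop) [DecidablePred p]
    (hP : ∀ i k, P i k = ∑ j ∈ univ.filter p, f j i * f j k) : IsStarProjection P :=
  eq_transpose_mul_diagonal_mul_of_sum p hP ▸
    (isStarProjection_diagonal_ite p).transpose_mul_mul (mul_transpose_eq_one_of_orthonormal hf)

end Conjugation

section Norms

variable {d : ℕ}

lemma frobNorm_nonneg (M : Matrix (Fin d) (Fin d) ℝ) : 0 ≤ frobNorm M := Real.sqrt_nonneg _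

lemma specNorm_neg (E : Matrix (Fin d) (Fin d) ℝ) : specNorm (-E) = specNorm E := by
  rw [specNorm, specNorm, map_neg, norm_neg]

lemma sq_frobNorm (M : Matrix (Fin d) (Fin d) ℝ) : frobNorm M ^ 2 = (M * Mᵀ).trace := by
  rw [frobNorm, Real.sq_sqrt (by positivity)]
  simp only [trace, Matrix.diag, mul_apply, transpose_apply, sq]

lemma frobNorm_transpose (M : Matrix (Fin d) (Fin d) ℝ) : frobNorm Mᵀ = frobNorm M := by
  simp only [frobNorm, transpose_apply]
  rw [sum_comm]

lemma trace_mul_transpose_le (A B : Matrix (Fin d) (Fin d) ℝ) :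
    (A * Bᵀ).trace ≤ frobNorm A * frobNorm B := by
  have h := Real.sum_mul_le_sqrt_mul_sqrt univ (fun p : Fin d × Fin d => A p.1 p.2)
    (fun p => B p.1 p.2)
  simpa only [frobNorm, trace, Matrix.diag, mul_apply, transpose_apply, Fintype.sum_prod_type]
    using h

open scoped Matrix.Norms.L2Operator in
lemma specNorm_transpose (E : Matrix (Fin d) (Fin d) ℝ) : specNorm Eᵀ = specNorm E := by
  rw [specNorm, specNorm, l2_opNorm_toEuclideanCLM, l2_opNorm_toEuclideanCLM,
    ← conjTranspose_eq_transpose_of_trivial, l2_opNorm_conjTranspose]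

lemma sq_frobNorm_eq_sum_norm_col_sq (M : Matrix (Fin d) (Fin d) ℝ) :
    frobNorm M ^ 2 = ∑ k, ‖WithLp.toLp 2 (fun j => M j k)‖ ^ 2 := by
  rw [frobNorm, Real.sq_sqrt (by positivity), sum_comm]
  simp only [EuclideanSpace.norm_sq_eq, Real.norm_eq_abs, sq_abs]

open scoped Matrix.Norms.L2Operator in
lemma frobNorm_mul_le (E X : Matrix (Fin d) (Fin d) ℝ) :
    frobNorm (E * X) ≤ specNorm E * frobNorm X := by
  have hcol (k : Fin d) : ‖WithLp.toLp 2 (fun j => (E * X) j k)‖ ^ 2 ≤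
      specNorm E ^ 2 * ‖WithLp.toLp 2 (fun j => X j k)‖ ^ 2 := by
    rw [← mul_pow]
    exact pow_le_pow_left₀ (norm_nonneg _)
      (l2_opNorm_mulVec E (WithLp.toLp 2 (fun j => X j k))) 2
  have hsq : frobNorm (E * X) ^ 2 ≤ (specNorm E * frobNorm X) ^ 2 := by
    rw [mul_pow, sq_frobNorm_eq_sum_norm_col_sq, sq_frobNorm_eq_sum_norm_col_sq, mul_sum]
    exact sum_le_sum fun k _ => hcol k
  exact (pow_le_pow_iff_left₀ (Real.sqrt_nonneg _)
    (mul_nonneg (norm_nonneg _) (Real.sqrt_nonneg _)) two_ne_zero).mp hsq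

end Norms

section Projections

variable {d : ℕ} {P Q : Matrix (Fin d) (Fin d) ℝ}

lemma sq_frobNorm_of_isStarProjection (hP : IsStarProjection P) : frobNorm P ^ 2 = P.trace := by
  rw [sq_frobNorm, hP.transpose_eq_self, hP.isIdempotentElem.eq]

lemma sq_frobNorm_sub (hP : IsStarProjection P) (hQ : IsStarProjection Q) :
    frobNorm (Q - P) ^ 2 = Q.trace + P.trace - 2 * (P * Q).trace := by
  obtain ⟨hPP, hPt⟩ := isStarProjection_iff_transpose.mp hP
  obtain ⟨hQQ, hQt⟩ := isStarProjection_iff_transpose.mp hQ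
  rw [sq_frobNorm, transpose_sub, hPt, hQt, sub_mul, mul_sub, mul_sub, hPP, hQQ, trace_sub,
    trace_sub, trace_sub, trace_mul_comm Q P]
  ring

lemma sq_frobNorm_one_sub_mul (hP : IsStarProjection P) (hQ : IsStarProjection Q) :
    frobNorm ((1 - P) * Q) ^ 2 = Q.trace - (P * Q).trace := by
  obtain ⟨hPP, hPt⟩ := isStarProjection_iff_transpose.mp hP.one_sub
  obtain ⟨hQQ, hQt⟩ := isStarProjection_iff_transpose.mp hQ
  rw [sq_frobNorm, transpose_mul, hPt, hQt, Matrix.mul_assoc, ← Matrix.mul_assoc Q, hQQ,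
    trace_mul_comm, Matrix.mul_assoc, hPP, mul_sub, Matrix.mul_one, trace_sub,
    trace_mul_comm Q P]

lemma sqrt_two_mul_frobNorm_one_sub_mul (hP : IsStarProjection P) (hQ : IsStarProjection Q)
    (htr : P.trace = Q.trace) : √2 * frobNorm ((1 - P) * Q) = frobNorm (Q - P) := by
  refine (sq_eq_sq₀ (mul_nonneg (Real.sqrt_nonneg 2) (frobNorm_nonneg _)) (frobNorm_nonneg _)).mp ?_
  rw [mul_pow, Real.sq_sqrt zero_le_two, sq_frobNorm_one_sub_mul hP hQ, sq_frobNorm_sub hP hQ, htr]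
  ring

lemma trace_mul_le_of_mul_eq {E M : Matrix (Fin d) (Fin d) ℝ} (hM : M * Q = M) :
    (E * M).trace ≤ specNorm E * frobNorm Q * frobNorm M := by
  have hQE : frobNorm (Q * E) ≤ specNorm E * frobNorm Q := by
    rw [← frobNorm_transpose, transpose_mul, ← specNorm_transpose E, ← frobNorm_transpose Q]
    exact frobNorm_mul_le _ _
  calc (E * M).trace = (Q * E * Mᵀᵀ).trace := by
        conv_lhs => rw [← hM]
        rw [← Matrix.mul_assoc, trace_mul_comm, transpose_transpose, Matrix.mul_assoc]
    _ ≤ frobNorm (Q * E) * frobNorm Mᵀ := trace_mul_transpose_le _ _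
    _ ≤ specNorm E * frobNorm Q * frobNorm M := by
        rw [frobNorm_transpose]
        exact mul_le_mul_of_nonneg_right hQE (frobNorm_nonneg _)

lemma trace_mul_sub_eq_add (E : Matrix (Fin d) (Fin d) ℝ) (hP : IsStarProjection P)
    (hQ : IsStarProjection Q) :
    (E * (Q - P)).trace = (E * ((1 - P) * Q)).trace + (-Eᵀ * ((1 - Q) * P)).trace := by
  have hQP : Q - P = (1 - P) * Q - P * (1 - Q) := by
    rw [sub_mul, mul_sub, Matrix.one_mul, Matrix.mul_one]
    abel
  rw [neg_mul, trace_neg, ← trace_transpose (Eᵀ * _), transpose_mul, transpose_mul,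
    transpose_transpose, hP.transpose_eq_self, hQ.one_sub.transpose_eq_self,
    trace_mul_comm (P * (1 - Q)), hQP, mul_sub, trace_sub, sub_eq_add_neg]

lemma trace_mul_sub_le (E : Matrix (Fin d) (Fin d) ℝ) (hP : IsStarProjection P)
    (hQ : IsStarProjection Q) (htr : P.trace = Q.trace) :
    (E * (Q - P)).trace ≤ √2 * specNorm E * frobNorm Q * frobNorm (Q - P) := by
  have hPQ : frobNorm P = frobNorm Q := by
    rw [← sq_eq_sq₀ (frobNorm_nonneg _) (frobNorm_nonneg _), sq_frobNorm_of_isStarProjection hP,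
      sq_frobNorm_of_isStarProjection hQ, htr]
  have hx : frobNorm ((1 - Q) * P) = frobNorm ((1 - P) * Q) := by
    rw [← sq_eq_sq₀ (frobNorm_nonneg _) (frobNorm_nonneg _), sq_frobNorm_one_sub_mul hQ hP,
      sq_frobNorm_one_sub_mul hP hQ, htr, trace_mul_comm]
  have h1 := trace_mul_le_of_mul_eq (E := E) (Q := Q) (M := (1 - P) * Q) (by
    rw [Matrix.mul_assoc, hQ.isIdempotentElem.eq])
  have h2 := trace_mul_le_of_mul_eq (E := -Eᵀ) (Q := P) (M := (1 - Q) * P) (by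
    rw [Matrix.mul_assoc, hP.isIdempotentElem.eq])
  rw [specNorm_neg, specNorm_transpose, hPQ, hx] at h2
  calc (E * (Q - P)).trace ≤ 2 * (specNorm E * frobNorm Q * frobNorm ((1 - P) * Q)) := by
        linarith [trace_mul_sub_eq_add E hP hQ]
    _ = √2 * specNorm E * frobNorm Q * frobNorm (Q - P) := by
        rw [← sqrt_two_mul_frobNorm_one_sub_mul hP hQ htr]
        linear_combination (-(specNorm E * frobNorm Q * frobNorm ((1 - P) * Q))) *
          Real.mul_self_sqrt (zero_le_two (α := ℝ))

end Projections

section Gap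

variable {d m : ℕ}

lemma gap_mul_le_sum_sub_sum (hmd : m < d) {lam q : Fin d → ℝ} (hlam : Antitone lam)
    (hq : ∀ j, q j ∈ Set.Icc 0 1) (hsum : ∑ j, q j = m) :
    (lam ⟨m - 1, Nat.sub_lt_of_lt hmd⟩ - lam ⟨m, hmd⟩) *
        (m - ∑ j ∈ univ.filter (fun j : Fin d => (j : ℕ) < m), q j) ≤
      ∑ j ∈ univ.filter (fun j : Fin d => (j : ℕ) < m), lam j - ∑ j, lam j * q j := by
  set L := univ.filter (fun j : Fin d => (j : ℕ) < m)
  set L' := univ.filter (fun j : Fin d => ¬ (j : ℕ) < m)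
  have hcard : #L = m := by rw [Fin.card_filter_val_lt]; omega
  have hL : ∑ j ∈ L, (1 - q j) = m - ∑ j ∈ L, q j := by
    rw [sum_sub_distrib, sum_const, hcard, nsmul_one]
  have hL' : ∑ j ∈ L', q j = m - ∑ j ∈ L, q j := by
    rw [← hsum, ← sum_filter_add_sum_filter_not univ (fun j : Fin d => (j : ℕ) < m) q]
    ring
  have hin : ∀ j ∈ L, lam ⟨m - 1, Nat.sub_lt_of_lt hmd⟩ * (1 - q j) ≤ lam j * (1 - q j) := by
    intro j hj
    have hjm : (j : ℕ) < m := (mem_filter.mp hj).2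
    exact mul_le_mul_of_nonneg_right (hlam (Fin.le_def.mpr (by simp only; omega)))
      (by linarith [(hq j).2])
  have hout : ∀ j ∈ L', lam j * q j ≤ lam ⟨m, hmd⟩ * q j := by
    intro j hj
    have hjm : ¬ (j : ℕ) < m := (mem_filter.mp hj).2
    exact mul_le_mul_of_nonneg_right (hlam (Fin.le_def.mpr (by simp only; omega))) (hq j).1
  calc (lam ⟨m - 1, Nat.sub_lt_of_lt hmd⟩ - lam ⟨m, hmd⟩) * (m - ∑ j ∈ L, q j)
      = ∑ j ∈ L, lam ⟨m - 1, Nat.sub_lt_of_lt hmd⟩ * (1 - q j) -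
          ∑ j ∈ L', lam ⟨m, hmd⟩ * q j := by
        rw [← mul_sum, ← mul_sum, hL, hL']
        ring
    _ ≤ ∑ j ∈ L, lam j * (1 - q j) - ∑ j ∈ L', lam j * q j :=
        sub_le_sub (sum_le_sum hin) (sum_le_sum hout)
    _ = ∑ j ∈ L, lam j - ∑ j, lam j * q j := by
        rw [← sum_filter_add_sum_filter_not univ (fun j : Fin d => (j : ℕ) < m)
          (fun j => lam j * q j)]
        simp only [mul_sub, mul_one, sum_sub_distrib]
        ring

lemma gap_mul_le_trace_mul_sub (hmd : m < d) {F S P Q : Matrix (Fin d) (Fin d) ℝ}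
    {lam : Fin d → ℝ} (hF : F * Fᵀ = 1) (hlam : Antitone lam) (hS : S = Fᵀ * diagonal lam * F)
    (hP : P = Fᵀ * diagonal (fun j : Fin d => if (j : ℕ) < m then (1 : ℝ) else 0) * F)
    (hQ : IsStarProjection Q) (hQtr : Q.trace = m) :
    (lam ⟨m - 1, Nat.sub_lt_of_lt hmd⟩ - lam ⟨m, hmd⟩) * (m - (P * Q).trace) ≤
      (S * (P - Q)).trace := by
  have hFt : Fᵀ * Fᵀᵀ = 1 := by rw [transpose_transpose, mul_eq_one_comm.mp hF]
  have hFF (X : Matrix (Fin d) (Fin d) ℝ) : F * (Fᵀ * X * F) * Fᵀ = X := by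
    simp only [← Matrix.mul_assoc, hF, Matrix.one_mul]
    rw [Matrix.mul_assoc, hF, Matrix.mul_one]
  set Q' := F * Q * Fᵀ
  have hQ' : IsStarProjection Q' := by
    simpa only [transpose_transpose] using hQ.transpose_mul_mul hFt
  have hSP : (S * P).trace = ∑ j ∈ univ.filter (fun j : Fin d => (j : ℕ) < m), lam j := by
    rw [hS, hP, trace_transpose_mul_mul_mul, hFF, trace_diagonal_mul, sum_filter]
    simp only [diagonal_apply_eq, mul_ite, mul_one, mul_zero]
  have hSQ : (S * Q).trace = ∑ j, lam j * Q' j j := by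
    rw [hS, trace_transpose_mul_mul_mul, trace_diagonal_mul]
  have hPQ : (P * Q).trace = ∑ j ∈ univ.filter (fun j : Fin d => (j : ℕ) < m), Q' j j := by
    rw [hP, trace_transpose_mul_mul_mul, trace_diagonal_mul, sum_filter]
    simp only [ite_mul, one_mul, zero_mul, Q']
  have hsum : ∑ j, Q' j j = m := by
    rw [← hQtr, ← trace_transpose_mul_mul hFt Q, transpose_transpose]
    rfl
  rw [Matrix.mul_sub, trace_sub, hSP, hSQ, hPQ]
  exact gap_mul_le_sum_sub_sum hmd hlam hQ'.diag_mem_Icc hsum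

end Gap

section Orthonormal

variable {d m : ℕ} {f : Fin d → EuclideanSpace ℝ (Fin d)} {P : Matrix (Fin d) (Fin d) ℝ}

lemma trace_eq_of_orthonormal (hmd : m ≤ d) (hf : Orthonormal ℝ f)
    (hP : ∀ i k, P i k = ∑ j ∈ univ.filter (fun j : Fin d => (j : ℕ) < m), f j i * f j k) :
    P.trace = m := by
  rw [eq_transpose_mul_diagonal_mul_of_sum _ hP,
    trace_transpose_mul_mul (mul_transpose_eq_one_of_orthonormal hf), trace_diagonal, sum_boole,
    Fin.card_filter_val_lt, min_eq_right hmd]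

lemma gap_mul_le_trace_mul_sub_of_orthonormal (hmd : m < d) {S Q : Matrix (Fin d) (Fin d) ℝ}
    {lam : Fin d → ℝ} (hf : Orthonormal ℝ f) (hlam : Antitone lam)
    (heig : ∀ j i, ∑ k, S i k * f j k = lam j * f j i)
    (hP : ∀ i k, P i k = ∑ j ∈ univ.filter (fun j : Fin d => (j : ℕ) < m), f j i * f j k)
    (hQ : IsStarProjection Q) (hQtr : Q.trace = m) :
    (lam ⟨m - 1, Nat.sub_lt_of_lt hmd⟩ - lam ⟨m, hmd⟩) * (m - (P * Q).trace) ≤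
      (S * (P - Q)).trace :=
  gap_mul_le_trace_mul_sub hmd (mul_transpose_eq_one_of_orthonormal hf) hlam
    (eq_transpose_mul_diagonal_mul_of_eigenvectors hf heig)
    (eq_transpose_mul_diagonal_mul_of_sum _ hP) hQ hQtr

end Orthonormal

/-- Subspace Davis–Kahan inequality (Vu–Lei 2013): for symmetric `S, Ŝ` with
`λ_m(S) > λ_{m+1}(S)`, the orthogonal projections `P^m(Ŝ), P^m(S)` onto the
spans of the `m` leading eigenvectors satisfy
`‖P^m(Ŝ) - P^m(S)‖_F ≤ 2√(2m)/(λ_m(S) - λ_{m+1}(S)) ‖Ŝ - S‖₂`.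
Here the eigensystems are given by orthonormal families of eigenvectors with
eigenvalues in descending order. -/
theorem davis_kahan_subspace {d : ℕ} (m : ℕ) (hmd : m < d)
    (S Shat : Matrix (Fin d) (Fin d) ℝ)
    -- orthonormal eigensystem of `S` with descending eigenvalues
    (lam : Fin d → ℝ) (f : Fin d → EuclideanSpace ℝ (Fin d))
    (horthf : Orthonormal ℝ f) (hdescf : Antitone lam)
    (heigf : ∀ j i, (∑ k, S i k * f j k) = lam j * f j i)
    -- orthonormal eigensystem of `Ŝ` with descending eigenvalues
    (mu : Fin d → ℝ) (g : Fin d → EuclideanSpace ℝ (Fin d))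
    (horthg : Orthonormal ℝ g) (hdescg : Antitone mu)
    (heigg : ∀ j i, (∑ k, Shat i k * g j k) = mu j * g j i)
    -- eigengap `λ_m(S) > λ_{m+1}(S)`
    (hgap : lam ⟨m, hmd⟩ < lam ⟨m - 1, by omega⟩)
    -- the projections onto the spans of the `m` leading eigenvectors
    (Pm Pmhat : Matrix (Fin d) (Fin d) ℝ)
    (hPm : ∀ i k, Pm i k = ∑ j ∈ Finset.univ.filter (fun j : Fin d => (j : ℕ) < m),
      f j i * f j k)
    (hPmhat : ∀ i k, Pmhat i k = ∑ j ∈ Finset.univ.filter (fun j : Fin d => (j : ℕ) < m),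
      g j i * g j k) :
    frobNorm (Pmhat - Pm) ≤
      2 * Real.sqrt (2 * m) / (lam ⟨m - 1, by omega⟩ - lam ⟨m, hmd⟩) *
        specNorm (Shat - S) := by
  have hP := isStarProjection_of_orthonormal horthf _ hPm
  have hQ := isStarProjection_of_orthonormal horthg _ hPmhat
  have hPtr := trace_eq_of_orthonormal hmd.le horthf hPm
  have hQtr := trace_eq_of_orthonormal hmd.le horthg hPmhat
  have hlowS := gap_mul_le_trace_mul_sub_of_orthonormal hmd horthf hdescf heigf hPm hQ hQtr
  have hlowShat :=
    gap_mul_le_trace_mul_sub_of_orthonormal hmd horthg hdescg heigg hPmhat hP hPtr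
  have hmu : 0 ≤ mu ⟨m - 1, by omega⟩ - mu ⟨m, hmd⟩ :=
    sub_nonneg.mpr (hdescg (Fin.le_def.mpr (by simp only; omega)))
  have hx : m - (Pm * Pmhat).trace = frobNorm (Pmhat - Pm) ^ 2 / 2 := by
    rw [sq_frobNorm_sub hP hQ, hPtr, hQtr]
    ring
  have hlow : (lam ⟨m - 1, by omega⟩ - lam ⟨m, hmd⟩) * (frobNorm (Pmhat - Pm) ^ 2 / 2) ≤
      ((Shat - S) * (Pmhat - Pm)).trace := by
    rw [trace_mul_comm Pmhat, hx] at hlowShat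
    have hSneg : (S * (Pmhat - Pm)).trace = -(S * (Pm - Pmhat)).trace := by
      rw [← trace_neg, ← Matrix.mul_neg, neg_sub]
    rw [← hx, Matrix.sub_mul, trace_sub, hSneg]
    nlinarith [mul_nonneg hmu (sq_nonneg (frobNorm (Pmhat - Pm)))]
  have hup := trace_mul_sub_le (Shat - S) hP hQ (hPtr.trans hQtr.symm)
  rw [← Real.sqrt_sq (frobNorm_nonneg Pmhat), sq_frobNorm_of_isStarProjection hQ, hQtr] at hup
  have hδ : 0 < lam ⟨m - 1, by omega⟩ - lam ⟨m, hmd⟩ := sub_pos.mpr hgap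
  rcases (frobNorm_nonneg (Pmhat - Pm)).eq_or_lt with hx0 | hxpos
  · rw [← hx0]
    exact mul_nonneg (div_nonneg (by positivity) hδ.le) (norm_nonneg _)
  · rw [div_mul_eq_mul_div, le_div_iff₀ hδ, Real.sqrt_mul zero_le_two]
    nlinarith
end
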